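/- For formal power series F = ∑_{n≥1} F_n X^n and G = ∑_{n≥1} G_n X^n over ℂ with zero constant term, define the exponential eñe product F ⋆ₑ G := -∑_{n≥1} n·F_n·G_n·X^n. For an integer k ∈ ℤ and w ∈ ℂ∖{0}, let E_{k,w} := -∑_{n≥1} n^{k-1}·w^{-n}·X^n ∈ ℂ[[X]], where n^{k-1} denotes the (possibly negative) integer power of n in ℂ. Then for all k, l ∈ ℤ and all z₀, z₁ ∈ ℂ∖{0}: E_{k,z₀} ⋆ₑ E_{l,z₁} = E_{k+l, z₀·z₁}. -/

import Mathlib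

/-- The exponential eñe product of two formal power series (with zero constant term):
`F ⋆ₑ G = -∑_{n≥1} n·Fₙ·Gₙ·Xⁿ`. -/
noncomputable def eneExp (F G : PowerSeries ℂ) : PowerSeries ℂ :=
  PowerSeries.mk fun n =>
    -((n : ℂ) * PowerSeries.coeff n F * PowerSeries.coeff n G)

/-- `E k w = -∑_{n≥1} n^(k-1)·w⁻ⁿ·Xⁿ` for `k ∈ ℤ`, `w ≠ 0`: the infinite-order zero
(`k ≥ 1`), logarithm (`k = 0`) and eñe-pole/polylogarithm (`k ≤ -1`) series. -/
noncomputable def eulerSeries (k : ℤ) (w : ℂ) : PowerSeries ℂ :=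
  PowerSeries.mk fun n =>
    if n = 0 then 0 else -((n : ℂ) ^ (k - 1) * w ^ (-(n : ℤ)))

open PowerSeries

theorem coeff_eneExp (F G : PowerSeries ℂ) (n : ℕ) :
    coeff n (eneExp F G) = -((n : ℂ) * coeff n F * coeff n G) :=
  coeff_mk _ _

theorem coeff_eulerSeries_zero (k : ℤ) (w : ℂ) : coeff 0 (eulerSeries k w) = 0 := by
  simp [eulerSeries]

theorem coeff_eulerSeries_of_ne_zero (k : ℤ) (w : ℂ) {n : ℕ} (hn : n ≠ 0) :
    coeff n (eulerSeries k w) = -((n : ℂ) ^ (k - 1) * w ^ (-(n : ℤ))) := by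
  simp [eulerSeries, hn]

theorem zpow_sub_one_mul_zpow_sub_one_mul_self {G₀ : Type*} [GroupWithZero G₀] {a : G₀}
    (ha : a ≠ 0) (k l : ℤ) : a ^ (k - 1) * a ^ (l - 1) * a = a ^ (k + l - 1) := by
  rw [← zpow_add₀ ha, ← zpow_add_one₀ ha]
  congr 1
  ring

theorem eneExp_eulerSeries_int_general
    (k l : ℤ) (z₀ z₁ : ℂ) :
    eneExp (eulerSeries k z₀) (eulerSeries l z₁) = eulerSeries (k + l) (z₀ * z₁) := by
  ext n
  rw [coeff_eneExp]
  rcases eq_or_ne n 0 with rfl | hn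
  · simp [coeff_eulerSeries_zero]
  · rw [coeff_eulerSeries_of_ne_zero _ _ hn, coeff_eulerSeries_of_ne_zero _ _ hn,
      coeff_eulerSeries_of_ne_zero _ _ hn, mul_zpow,
      ← zpow_sub_one_mul_zpow_sub_one_mul_self (Nat.cast_ne_zero.mpr hn) k l]
    ring

/-- For all `k, l ∈ ℤ` and nonzero `z₀, z₁ ∈ ℂ`:
`E_{k,z₀} ⋆ₑ E_{l,z₁} = E_{k+l, z₀·z₁}`. -/
theorem eneExp_eulerSeries_int
    (k l : ℤ) (z₀ z₁ : ℂ) (hz₀ : z₀ ≠ 0) (hz₁ : z₁ ≠ 0) :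
    eneExp (eulerSeries k z₀) (eulerSeries l z₁) = eulerSeries (k + l) (z₀ * z₁) :=
  eneExp_eulerSeries_int_general k l z₀ z₁
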